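/- Markov property of the trace for χ = G_n: for all 2ⁿ × 2ⁿ complex matrices A and B, Trace((A ⊗ I₂)·(I₂^{⊗(n−1)} ⊗ R_Q)·(B ⊗ I₂)) = Q·Trace(A·B), where the trace on the left is of 2^{n+1} × 2^{n+1} matrices. Equivalently, with normalized traces Tr_m = (1/2^m)·Trace, one has Tr_{n+1}((A ⊗ I₂)(I₂^{⊗(n−1)} ⊗ R_Q)(B ⊗ I₂)) = Tr_{n+1}(I₂^{⊗(n−1)} ⊗ R_Q)·Tr_{n+1}((A·B) ⊗ I₂). -/

import Mathlib

open Matrix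

noncomputable section

/-- Kronecker product of square matrices, reindexed to `Fin (a * b)`
(lexicographically: the first factor is the most significant). -/
def kron {a b : ℕ} (A : Matrix (Fin a) (Fin a) ℂ) (B : Matrix (Fin b) (Fin b) ℂ) :
    Matrix (Fin (a * b)) (Fin (a * b)) ℂ :=
  Matrix.reindex finProdFinEquiv finProdFinEquiv (Matrix.kroneckerMap (· * ·) A B)

/-- The rescaled Yang–Baxter solution
`R_Q` with rows `(Q,0,0,0), (0,0,Q⁻¹,0), (0,Q⁻¹,0,0), (0,0,0,Q)`. -/
def RQmat (Q : ℂ) : Matrix (Fin 4) (Fin 4) ℂ :=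
  !![Q, 0, 0, 0; 0, 0, Q⁻¹, 0; 0, Q⁻¹, 0, 0; 0, 0, 0, Q]

/-- `I₂^{⊗(n−1)} ⊗ M` as a `2ⁿ·2 × 2ⁿ·2` matrix.  The size condition in the `dite` holds
whenever `n ≥ 1`. -/
def bigTensor (n : ℕ) (M : Matrix (Fin 4) (Fin 4) ℂ) :
    Matrix (Fin (2 ^ n * 2)) (Fin (2 ^ n * 2)) ℂ :=
  if h : 2 ^ (n - 1) * 4 = 2 ^ n * 2 then
    Matrix.reindex (finCongr h) (finCongr h)
      (kron (1 : Matrix (Fin (2 ^ (n - 1))) (Fin (2 ^ (n - 1))) ℂ) M)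
  else 1

/-!
Write the index of `C ⊗ I₂` as `(x, a, s)` with `x` ranging over the first `n - 1` tensor factors.
Then `I ⊗ R_Q` acts as the identity on `x`, and tracing out the last factor `s` in
`(I ⊗ R_Q)(C ⊗ I₂)` replaces `R_Q` by its partial trace `Σ_s R_Q((a,s),(b,s))`, which is
`Q · I₂`: the two diagonal entries `Q` contribute once each, the entries `Q⁻¹` never do.
Hence `Trace((I ⊗ R_Q)(C ⊗ I₂)) = Q · Trace C`, and the theorem is the case `C = B A`
after cycling the trace.
-/

open scoped Kronecker

namespace Matrix

variable {R ι α β : Type*} [CommSemiring R] [Fintype ι] [Fintype α] [Fintype β]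

def partialTraceRight (M : Matrix (α × β) (α × β) R) : Matrix α α R :=
  fun a b => ∑ s, M (a, s) (b, s)

theorem trace_submatrix_equiv (e : α ≃ β) (M : Matrix β β R) :
    trace (M.submatrix e e) = trace M :=
  e.sum_comp fun i => M i i

theorem trace_one_kronecker_mul_kronecker_one [DecidableEq ι] [DecidableEq β]
    (M : Matrix (α × β) (α × β) R) (C : Matrix (ι × α) (ι × α) R) :
    trace (((1 : Matrix ι ι R) ⊗ₖ M).submatrix (Equiv.prodAssoc ι α β) (Equiv.prodAssoc ι α β) *
        (C ⊗ₖ (1 : Matrix β β R))) =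
      trace (((1 : Matrix ι ι R) ⊗ₖ partialTraceRight M) * C) := by
  simp only [trace, diag_apply, mul_apply, submatrix_apply, Equiv.prodAssoc_apply,
    kroneckerMap_apply, one_apply, ite_mul, one_mul, zero_mul, mul_ite, mul_one, mul_zero,
    Fintype.sum_prod_type, Finset.sum_ite_eq', Finset.mem_univ, ↓reduceIte, Finset.sum_ite_irrel,
    Finset.sum_const_zero, Finset.sum_ite_eq, partialTraceRight, Finset.mul_sum, Finset.sum_mul]
  exact Finset.sum_congr rfl fun _ _ => Finset.sum_congr rfl fun _ _ => Finset.sum_comm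

end Matrix

section Kron

variable {a b : ℕ}

theorem kron_apply (A : Matrix (Fin a) (Fin a) ℂ) (B : Matrix (Fin b) (Fin b) ℂ)
    (i j : Fin a) (k l : Fin b) :
    kron A B (finProdFinEquiv (i, k)) (finProdFinEquiv (j, l)) = A i j * B k l := by
  simp [kron]

theorem kron_mul (A C : Matrix (Fin a) (Fin a) ℂ) (B D : Matrix (Fin b) (Fin b) ℂ) :
    kron A B * kron C D = kron (A * C) (B * D) := by
  simp only [kron, reindex_apply, submatrix_mul_equiv, mul_kronecker_mul]

theorem trace_kron (A : Matrix (Fin a) (Fin a) ℂ) (B : Matrix (Fin b) (Fin b) ℂ) :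
    trace (kron A B) = trace A * trace B := by
  rw [kron, reindex_apply, trace_submatrix_equiv, trace_kronecker]

end Kron

def finPowSuccEquiv (m : ℕ) : Fin (2 ^ m) × Fin 2 ≃ Fin (2 ^ (m + 1)) :=
  finProdFinEquiv.trans (finCongr (pow_succ 2 m).symm)

def finPowSuccMulTwoEquiv (m : ℕ) : (Fin (2 ^ m) × Fin 2) × Fin 2 ≃ Fin (2 ^ (m + 1) * 2) :=
  ((finPowSuccEquiv m).prodCongr (Equiv.refl _)).trans finProdFinEquiv

theorem kron_one_submatrix_finPowSuccMulTwoEquiv (m : ℕ)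
    (C : Matrix (Fin (2 ^ (m + 1))) (Fin (2 ^ (m + 1))) ℂ) :
    (kron C 1).submatrix (finPowSuccMulTwoEquiv m) (finPowSuccMulTwoEquiv m) =
      C.submatrix (finPowSuccEquiv m) (finPowSuccEquiv m) ⊗ₖ 1 := by
  ext ⟨x, s⟩ ⟨y, t⟩
  simp [finPowSuccMulTwoEquiv, kron_apply]

theorem bigTensor_succ (m : ℕ) (M : Matrix (Fin 4) (Fin 4) ℂ) (h : 2 ^ m * 4 = 2 ^ (m + 1) * 2) :
    bigTensor (m + 1) M = reindex (finCongr h) (finCongr h) (kron 1 M) :=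
  dif_pos h

theorem bigTensor_succ_submatrix_finPowSuccMulTwoEquiv (m : ℕ) (M : Matrix (Fin 4) (Fin 4) ℂ) :
    (bigTensor (m + 1) M).submatrix (finPowSuccMulTwoEquiv m) (finPowSuccMulTwoEquiv m) =
      ((1 : Matrix (Fin (2 ^ m)) (Fin (2 ^ m)) ℂ) ⊗ₖ
        M.submatrix (finProdFinEquiv : Fin 2 × Fin 2 ≃ Fin 4) finProdFinEquiv).submatrix
          (Equiv.prodAssoc _ _ _) (Equiv.prodAssoc _ _ _) := by
  have h : 2 ^ m * 4 = 2 ^ (m + 1) * 2 := by rw [pow_succ]; ring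
  have hidx : ∀ p, (finCongr h).symm (finPowSuccMulTwoEquiv m p) =
      finProdFinEquiv (p.1.1, finProdFinEquiv (p.1.2, p.2)) := by
    rintro ⟨⟨x, a⟩, s⟩
    ext
    simp only [finPowSuccMulTwoEquiv, finPowSuccEquiv, Equiv.trans_apply, Equiv.prodCongr_apply,
      Prod.map, Equiv.refl_apply, finCongr_symm, Fin.val_cast, finCongr_apply,
      finProdFinEquiv_apply_val]
    ring
  ext p q
  rw [bigTensor_succ m M h, reindex_apply, submatrix_apply, submatrix_apply, hidx, hidx,
    kron_apply]
  rfl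

theorem trace_bigTensor_succ_mul_kron_one (m : ℕ) (M : Matrix (Fin 4) (Fin 4) ℂ)
    (C : Matrix (Fin (2 ^ (m + 1))) (Fin (2 ^ (m + 1))) ℂ) :
    trace (bigTensor (m + 1) M * kron C 1) =
      trace (((1 : Matrix (Fin (2 ^ m)) (Fin (2 ^ m)) ℂ) ⊗ₖ
        partialTraceRight (M.submatrix (finProdFinEquiv : Fin 2 × Fin 2 ≃ Fin 4)
          finProdFinEquiv)) *
          C.submatrix (finPowSuccEquiv m) (finPowSuccEquiv m)) := by
  rw [← trace_submatrix_equiv (finPowSuccMulTwoEquiv m), ← submatrix_mul_equiv _ _ _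
    (finPowSuccMulTwoEquiv m), bigTensor_succ_submatrix_finPowSuccMulTwoEquiv,
    kron_one_submatrix_finPowSuccMulTwoEquiv, trace_one_kronecker_mul_kronecker_one]

theorem partialTraceRight_RQmat (Q : ℂ) :
    partialTraceRight ((RQmat Q).submatrix (finProdFinEquiv : Fin 2 × Fin 2 ≃ Fin 4)
      finProdFinEquiv) = Q • 1 := by
  have e00 : finProdFinEquiv ((0 : Fin 2), (0 : Fin 2)) = 0 := rfl
  have e01 : finProdFinEquiv ((0 : Fin 2), (1 : Fin 2)) = 1 := rfl
  have e10 : finProdFinEquiv ((1 : Fin 2), (0 : Fin 2)) = 2 := rfl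
  have e11 : finProdFinEquiv ((1 : Fin 2), (1 : Fin 2)) = 3 := rfl
  ext a b
  fin_cases a <;> fin_cases b <;>
    simp [partialTraceRight, RQmat, Fin.sum_univ_two, e00, e01, e10, e11]

theorem trace_bigTensor_succ_RQmat_mul_kron_one (m : ℕ) (Q : ℂ)
    (C : Matrix (Fin (2 ^ (m + 1))) (Fin (2 ^ (m + 1))) ℂ) :
    trace (bigTensor (m + 1) (RQmat Q) * kron C 1) = Q * trace C := by
  rw [trace_bigTensor_succ_mul_kron_one, partialTraceRight_RQmat, kronecker_smul,
    one_kronecker_one, smul_mul, one_mul, trace_smul, trace_submatrix_equiv, smul_eq_mul]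

theorem trace_bigTensor_succ_RQmat (m : ℕ) (Q : ℂ) :
    trace (bigTensor (m + 1) (RQmat Q)) = 2 ^ m * (2 * Q) := by
  rw [bigTensor_succ m _ (by rw [pow_succ]; ring), reindex_apply, trace_submatrix_equiv,
    trace_kron, trace_one]
  simp [RQmat, trace, Fin.sum_univ_four, two_mul]

theorem stmt_18_general (n : ℕ) (hn : 2 ≤ n) (Q : ℂ) :
    ∀ A B : Matrix (Fin (2 ^ n)) (Fin (2 ^ n)) ℂ,
      Matrix.trace (kron A (1 : Matrix (Fin 2) (Fin 2) ℂ) * bigTensor n (RQmat Q) *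
          kron B (1 : Matrix (Fin 2) (Fin 2) ℂ)) =
        Q * Matrix.trace (A * B) ∧
      ((2 : ℂ) ^ (n + 1))⁻¹ *
          Matrix.trace (kron A (1 : Matrix (Fin 2) (Fin 2) ℂ) * bigTensor n (RQmat Q) *
            kron B (1 : Matrix (Fin 2) (Fin 2) ℂ)) =
        (((2 : ℂ) ^ (n + 1))⁻¹ * Matrix.trace (bigTensor n (RQmat Q))) *
          (((2 : ℂ) ^ (n + 1))⁻¹ *
            Matrix.trace (kron (A * B) (1 : Matrix (Fin 2) (Fin 2) ℂ))) := by
  obtain ⟨m, rfl⟩ : ∃ m, n = m + 1 := ⟨n - 1, by omega⟩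
  intro A B
  have markov : trace (kron A 1 * bigTensor (m + 1) (RQmat Q) * kron B 1) =
      Q * trace (A * B) := by
    rw [trace_mul_cycle, kron_mul, one_mul, trace_mul_comm,
      trace_bigTensor_succ_RQmat_mul_kron_one, trace_mul_comm]
  refine ⟨markov, ?_⟩
  rw [markov, trace_bigTensor_succ_RQmat, trace_kron, trace_one, Fintype.card_fin]
  field_simp
  ring

/-- Markov property for `χ = G_n`: for all `2ⁿ × 2ⁿ` matrices `A, B`,
`Trace((A ⊗ I₂)(I₂^{⊗(n−1)} ⊗ R_Q)(B ⊗ I₂)) = Q·Trace(A·B)`; equivalently, with the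
normalized traces `Tr_m = 2^{−m}·Trace`,
`Tr_{n+1}((A ⊗ I₂)(I₂^{⊗(n−1)} ⊗ R_Q)(B ⊗ I₂)) = Tr_{n+1}(I₂^{⊗(n−1)} ⊗ R_Q)·Tr_{n+1}((A·B) ⊗ I₂)`. -/
theorem stmt_18 (n : ℕ) (hn : 2 ≤ n) (Q : ℂ) (hQ : Q ≠ 0) (hQ2 : Q ^ 2 ≠ 1) :
    ∀ A B : Matrix (Fin (2 ^ n)) (Fin (2 ^ n)) ℂ,
      Matrix.trace (kron A (1 : Matrix (Fin 2) (Fin 2) ℂ) * bigTensor n (RQmat Q) *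
          kron B (1 : Matrix (Fin 2) (Fin 2) ℂ)) =
        Q * Matrix.trace (A * B) ∧
      ((2 : ℂ) ^ (n + 1))⁻¹ *
          Matrix.trace (kron A (1 : Matrix (Fin 2) (Fin 2) ℂ) * bigTensor n (RQmat Q) *
            kron B (1 : Matrix (Fin 2) (Fin 2) ℂ)) =
        (((2 : ℂ) ^ (n + 1))⁻¹ * Matrix.trace (bigTensor n (RQmat Q))) *
          (((2 : ℂ) ^ (n + 1))⁻¹ *
            Matrix.trace (kron (A * B) (1 : Matrix (Fin 2) (Fin 2) ℂ))) :=
  stmt_18_general n hn Q
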